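/- arXiv:1102.0712 — 4 statements merged into one kernel-verified Lean document; each statement's English description precedes it below -/
import Mathlib

section
/- For a finite graph G with root ∘ of neighbors v_1, ..., v_k, the root-exposure probability satisfies the recursion R_z[G,∘] = z² / (z² + Σ_{v ∼ ∘} R_z[G - ∘, v]), for every z > 0. -/
open scoped Classical

/-- A matching on a graph `G`: a set of edges of `G` that are pairwise non-adjacent. -/
def IsMatching {V : Type*} (G : SimpleGraph V) (M : Finset (Sym2 V)) : Prop :=
  (∀ e ∈ M, e ∈ G.edgeSet) ∧
    ∀ e ∈ M, ∀ f ∈ M, e ≠ f → ∀ v : V, v ∈ e → v ∉ f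

/-- The matching polynomial `P_G(z) = Σ_{M matching of G} z^{|V| - 2|M|}`. -/
noncomputable def matchingPolynomial {V : Type*} [Fintype V] (G : SimpleGraph V)
    (z : ℝ) : ℝ :=
  ∑ M ∈ Finset.univ.filter (fun M : Finset (Sym2 V) => IsMatching G M),
    z ^ (Fintype.card V - 2 * M.card)

/-- The root-exposure probability `R_z[G,∘] = z ⬝ P_{G-∘}(z) / P_G(z)`. -/
noncomputable def rootExposure {V : Type*} [Fintype V] (G : SimpleGraph V)
    (r : V) (z : ℝ) : ℝ :=
  z * matchingPolynomial (G.induce {v | v ≠ r}) z / matchingPolynomial G z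

/-!
Sorting the matchings of `G` by whether they cover the root `r`, and if so by the edge `s(r, v)`
that covers it, gives the deletion formula `P_G = z P_{G-r} + Σ_{v ∼ r} P_{G-r-v}`: a matching of
an induced subgraph is the same thing as a matching of `G` supported on its vertex set, and
removing the edge `s(r, v)` lowers the number of edges by one and the number of uncovered vertices
by two. Since `P_{G-r}(z) > 0` for `z > 0`, dividing by `P_{G-r}` turns the deletion formula
into the recursion.
-/

open Finset

section IsMatching

variable {V W : Type*} {G : SimpleGraph V} {M N : Finset (Sym2 V)}

lemma IsMatching.eq_of_mem_of_mem (hM : IsMatching G M) {e f : Sym2 V} (he : e ∈ M) (hf : f ∈ M)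
    {x : V} (hxe : x ∈ e) (hxf : x ∈ f) : e = f :=
  by_contra fun hef => hM.2 e he f hf hef x hxe hxf

lemma IsMatching.mono (hM : IsMatching G M) (hNM : N ⊆ M) : IsMatching G N :=
  ⟨fun e he => hM.1 e (hNM he), fun e he f hf => hM.2 e (hNM he) f (hNM hf)⟩

lemma IsMatching.insert (hM : IsMatching G M) {e : Sym2 V} (he : e ∈ G.edgeSet)
    (hdisj : ∀ f ∈ M, ∀ x ∈ e, x ∉ f) : IsMatching G (insert e M) := by
  refine ⟨fun f hf => ?_, fun f hf g hg hfg x hxf hxg => ?_⟩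
  · rcases mem_insert.1 hf with rfl | hf
    exacts [he, hM.1 f hf]
  · rcases mem_insert.1 hf with rfl | hfM <;> rcases mem_insert.1 hg with rfl | hgM
    · exact hfg rfl
    · exact hdisj g hgM x hxf hxg
    · exact hdisj f hfM x hxg hxf
    · exact hM.2 f hfM g hgM hfg x hxf hxg

lemma isMatching_map_iff {H : SimpleGraph W} (φ : H ↪g G) {M : Finset (Sym2 W)} :
    IsMatching G (M.map φ.toEmbedding.sym2Map) ↔ IsMatching H M := by
  simp only [IsMatching, mem_map, Function.Embedding.sym2Map_apply, forall_exists_index, and_imp,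
    forall_apply_eq_imp_iff₂, RelEmbedding.coe_toEmbedding, φ.map_mem_edgeSet_iff]
  refine and_congr_right fun _ => forall₂_congr fun e he => forall₂_congr fun f hf => ?_
  refine ⟨fun h hef x hxe hxf => ?_, fun h hef y hye hyf => ?_⟩
  · exact h (fun hef' => hef (Sym2.map.injective φ.injective hef')) (φ x)
      (Sym2.mem_map.2 ⟨x, hxe, rfl⟩) (Sym2.mem_map.2 ⟨x, hxf, rfl⟩)
  · obtain ⟨x, hxe, rfl⟩ := Sym2.mem_map.1 hye
    obtain ⟨x', hxf, hxx'⟩ := Sym2.mem_map.1 hyf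
    exact h (fun hef' => hef (hef' ▸ rfl)) x hxe (φ.injective hxx' ▸ hxf)

lemma Sym2.mem_range_map_of_forall_mem {f : W → V} {e : Sym2 V}
    (h : ∀ x ∈ e, x ∈ Set.range f) : e ∈ Set.range (Sym2.map f) := by
  induction e using Sym2.ind with
  | _ a b =>
    obtain ⟨a', rfl⟩ := h a (Sym2.mem_mk_left a b)
    obtain ⟨b', rfl⟩ := h _ (Sym2.mem_mk_right _ b)
    exact ⟨s(a', b'), rfl⟩

lemma range_induce_comp_induce_ne {r v : V} (hv : v ≠ r) :
    Set.range ((SimpleGraph.Embedding.induce (G := G) {u | u ≠ r}).comp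
      (SimpleGraph.Embedding.induce {w | w ≠ ⟨v, hv⟩})) = {u | u ≠ r ∧ u ≠ v} := by
  ext x
  constructor
  · rintro ⟨⟨⟨y, hyr⟩, hyv⟩, rfl⟩
    exact ⟨hyr, fun h => hyv (Subtype.ext h)⟩
  · rintro ⟨hxr, hxv⟩
    exact ⟨⟨⟨x, hxr⟩, fun h => hxv (congrArg Subtype.val h)⟩, rfl⟩

end IsMatching

section MatchingSums

variable {V W : Type*} [Fintype V] [Fintype W] {G : SimpleGraph V} {β : Type*} [AddCommMonoid β]

lemma IsMatching.two_mul_card_le {M : Finset (Sym2 V)} (hM : IsMatching G M) :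
    2 * #M ≤ Fintype.card V := by
  have hdisj : (M : Set (Sym2 V)).PairwiseDisjoint Sym2.toFinset := fun e he f hf hef =>
    disjoint_left.2 fun x hxe hxf =>
      hM.2 e he f hf hef x (Sym2.mem_toFinset.1 hxe) (Sym2.mem_toFinset.1 hxf)
  calc 2 * #M = ∑ e ∈ M, #e.toFinset := by
        rw [sum_congr rfl fun e he => Sym2.card_toFinset_of_not_isDiag e
          (G.not_isDiag_of_mem_edgeSet (hM.1 e he)), sum_const, smul_eq_mul, mul_comm]
    _ = #(M.biUnion Sym2.toFinset) := (card_biUnion hdisj).symm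
    _ ≤ Fintype.card V := card_le_univ _

noncomputable def matchingsWithin (G : SimpleGraph V) (s : Set V) : Finset (Finset (Sym2 V)) :=
  {M | IsMatching G M ∧ ∀ e ∈ M, ∀ x ∈ e, x ∈ s}

@[simp]
lemma mem_matchingsWithin {s : Set V} {M : Finset (Sym2 V)} :
    M ∈ matchingsWithin G s ↔ IsMatching G M ∧ ∀ e ∈ M, ∀ x ∈ e, x ∈ s := by
  simp [matchingsWithin]

lemma map_isMatching_eq_matchingsWithin_range {H : SimpleGraph W} (φ : H ↪g G) :
    ({M | IsMatching H M} : Finset _).map (mapEmbedding φ.toEmbedding.sym2Map).toEmbedding =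
      matchingsWithin G (Set.range φ) := by
  ext M
  simp only [mem_map, mem_filter, mem_univ, true_and, RelEmbedding.coe_toEmbedding,
    mapEmbedding_apply, mem_matchingsWithin]
  constructor
  · rintro ⟨M, hM, rfl⟩
    refine ⟨(isMatching_map_iff φ).2 hM, fun e he x hx => ?_⟩
    obtain ⟨e, -, rfl⟩ := mem_map.1 he
    obtain ⟨x, -, rfl⟩ := Sym2.mem_map.1 hx
    exact ⟨x, rfl⟩
  · rintro ⟨hM, hrange⟩
    have hpre : (M.preimage _ (φ.toEmbedding.sym2Map.injective.injOn)).map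
        φ.toEmbedding.sym2Map = M := by
      rw [map_eq_image, image_preimage]
      exact filter_true_of_mem fun e he => Sym2.mem_range_map_of_forall_mem (hrange e he)
    exact ⟨_, (isMatching_map_iff φ).1 (by rwa [hpre]), hpre⟩

lemma sum_isMatching_eq_sum_matchingsWithin_range {H : SimpleGraph W} (φ : H ↪g G)
    (f : ℕ → β) :
    ∑ M ∈ {M | IsMatching H M}, f #M = ∑ M ∈ matchingsWithin G (Set.range φ), f #M := by
  rw [← map_isMatching_eq_matchingsWithin_range φ, sum_map]
  simp

lemma sum_isMatching_eq_add_sum [DecidableRel G.Adj] (r : V) (f : Finset (Sym2 V) → β) :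
    ∑ M ∈ {M | IsMatching G M}, f M = ∑ M ∈ matchingsWithin G {u | u ≠ r}, f M +
      ∑ v ∈ G.neighborFinset r, ∑ M ∈ {M | IsMatching G M ∧ s(r, v) ∈ M}, f M := by
  have hdisj : (G.neighborFinset r : Set V).PairwiseDisjoint
      fun v => ({M | IsMatching G M ∧ s(r, v) ∈ M} : Finset _) := by
    intro v _ v' _ hvv'
    refine disjoint_left.2 fun M hM hM' => hvv' ?_
    simp only [mem_filter, mem_univ, true_and] at hM hM'
    exact Sym2.congr_right.1
      (hM.1.eq_of_mem_of_mem hM.2 hM'.2 (Sym2.mem_mk_left r v) (Sym2.mem_mk_left r v'))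
  rw [← sum_filter_add_sum_filter_not _ (fun M => ∀ e ∈ M, ∀ x ∈ e, x ∈ {u | u ≠ r}),
    filter_filter, ← sum_biUnion hdisj]
  refine congrArg₂ (· + ·) (sum_congr ?_ fun _ _ => rfl) (sum_congr ?_ fun _ _ => rfl)
  · ext M
    simp only [mem_filter, mem_univ, true_and, mem_matchingsWithin]
  · ext M
    simp only [mem_filter, mem_univ, true_and, mem_biUnion, SimpleGraph.mem_neighborFinset,
      Set.mem_ofPred_eq, not_forall, not_not]
    constructor
    · rintro ⟨hM, e, he, x, hxe, rfl⟩
      obtain ⟨v, rfl⟩ := Sym2.mem_iff_exists.1 hxe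
      exact ⟨v, hM.1 _ he, hM, he⟩
    · rintro ⟨v, -, hM, hrv⟩
      exact ⟨hM, _, hrv, r, Sym2.mem_mk_left r v, rfl⟩

lemma sum_isMatching_mem_eq_sum_matchingsWithin {r v : V} (hrv : G.Adj r v) (f : ℕ → β) :
    ∑ M ∈ {M | IsMatching G M ∧ s(r, v) ∈ M}, f #M =
      ∑ M ∈ matchingsWithin G {u | u ≠ r ∧ u ≠ v}, f (#M + 1) := by
  have hnotin : ∀ M ∈ matchingsWithin G {u | u ≠ r ∧ u ≠ v}, s(r, v) ∉ M :=
    fun M hM h =>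
      ((mem_matchingsWithin.1 hM).2 _ h r (Sym2.mem_mk_left r v)).1 rfl
  refine sum_nbij' (fun M => M.erase s(r, v)) (insert s(r, v)) ?_ ?_ ?_ ?_ ?_
  · simp only [mem_filter, mem_univ, true_and, and_imp]
    intro M hM hrvM
    refine mem_matchingsWithin.2 ⟨hM.mono (erase_subset _ _), fun e he x hxe => ?_⟩
    have hsame := hM.eq_of_mem_of_mem (mem_of_mem_erase he) hrvM hxe
    exact ⟨fun hxr => ne_of_mem_erase he (hsame (hxr ▸ Sym2.mem_mk_left r v)),
      fun hxv => ne_of_mem_erase he (hsame (hxv ▸ Sym2.mem_mk_right r v))⟩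
  · intro M hM
    obtain ⟨hM, havoid⟩ := mem_matchingsWithin.1 hM
    refine mem_filter.2 ⟨mem_univ _, hM.insert hrv fun e he x hx hxe => ?_, mem_insert_self _ _⟩
    rcases Sym2.mem_iff.1 hx with rfl | rfl
    exacts [(havoid e he x hxe).1 rfl, (havoid e he x hxe).2 rfl]
  · exact fun M hM => insert_erase (mem_filter.1 hM).2.2
  · exact fun M hM => erase_insert (hnotin M hM)
  · exact fun M hM => by rw [card_erase_add_one (mem_filter.1 hM).2.2]

end MatchingSums

section MatchingPolynomial

variable {V W : Type*} [Fintype V] [Fintype W] {G : SimpleGraph V}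

lemma matchingPolynomial_pos (H : SimpleGraph W) {z : ℝ} (hz : 0 < z) :
    0 < matchingPolynomial H z :=
  sum_pos (fun _ _ => pow_pos hz _) ⟨∅, mem_filter.2 ⟨mem_univ _, by simp [IsMatching]⟩⟩

lemma matchingPolynomial_eq_sum_matchingsWithin {H : SimpleGraph W} (φ : H ↪g G) (z : ℝ) :
    matchingPolynomial H z =
      ∑ M ∈ matchingsWithin G (Set.range φ), z ^ (Fintype.card W - 2 * #M) :=
  sum_isMatching_eq_sum_matchingsWithin_range φ (fun k => z ^ (Fintype.card W - 2 * k))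

lemma sum_matchingsWithin_ne_eq_mul_matchingPolynomial (r : V) (z : ℝ) :
    ∑ M ∈ matchingsWithin G {u | u ≠ r}, z ^ (Fintype.card V - 2 * #M) =
      z * matchingPolynomial (G.induce {u | u ≠ r}) z := by
  have hrange : Set.range (SimpleGraph.Embedding.induce (G := G) {u | u ≠ r}) = {u | u ≠ r} :=
    Subtype.range_coe
  have hcard : 0 < Fintype.card V := Fintype.card_pos_iff.2 ⟨r⟩
  calc ∑ M ∈ matchingsWithin G {u | u ≠ r}, z ^ (Fintype.card V - 2 * #M)
      = ∑ M ∈ {M | IsMatching (G.induce {u | u ≠ r}) M}, z ^ (Fintype.card V - 2 * #M) := by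
        rw [sum_isMatching_eq_sum_matchingsWithin_range (SimpleGraph.Embedding.induce _)
          (fun k => z ^ (Fintype.card V - 2 * k)), hrange]
    _ = ∑ M ∈ {M | IsMatching (G.induce {u | u ≠ r}) M},
          z * z ^ (Fintype.card {u | u ≠ r} - 2 * #M) := by
        refine sum_congr rfl fun M hM => ?_
        -- `2 * #M ≤ |V| - 1` lets the truncated exponent `|V| - 2 * #M` split off one factor `z`
        have hle := (mem_filter.1 hM).2.two_mul_card_le
        rw [Set.card_ne_eq] at hle ⊢
        rw [← pow_succ']
        congr 1
        omega
    _ = z * matchingPolynomial (G.induce {u | u ≠ r}) z := (mul_sum _ _ _).symm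

lemma sum_isMatching_mem_eq_matchingPolynomial {r v : V} (hrv : G.Adj r v) (z : ℝ) :
    ∑ M ∈ {M | IsMatching G M ∧ s(r, v) ∈ M}, z ^ (Fintype.card V - 2 * #M) =
      matchingPolynomial ((G.induce {u | u ≠ r}).induce {w | w ≠ ⟨v, hrv.ne'⟩}) z := by
  rw [sum_isMatching_mem_eq_sum_matchingsWithin hrv (fun k => z ^ (_ - 2 * k)),
    matchingPolynomial_eq_sum_matchingsWithin
    ((SimpleGraph.Embedding.induce _).comp (SimpleGraph.Embedding.induce _)),
    range_induce_comp_induce_ne, Set.card_ne_eq, Set.card_ne_eq]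
  refine sum_congr rfl fun M _ => ?_
  congr 1
  omega

theorem matchingPolynomial_eq_mul_add_sum [DecidableRel G.Adj] (r : V) (z : ℝ) :
    matchingPolynomial G z = z * matchingPolynomial (G.induce {u | u ≠ r}) z +
      ∑ v ∈ (G.neighborFinset r).attach, matchingPolynomial ((G.induce {u | u ≠ r}).induce
        {w | w ≠ ⟨v.1, ((G.mem_neighborFinset r v.1).mp v.2).ne'⟩}) z := by
  rw [matchingPolynomial, sum_isMatching_eq_add_sum r (fun M => z ^ (_ - 2 * #M)),
    sum_matchingsWithin_ne_eq_mul_matchingPolynomial, ← sum_attach]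
  congr 1
  exact sum_congr rfl fun v _ =>
    sum_isMatching_mem_eq_matchingPolynomial ((G.mem_neighborFinset r v.1).mp v.2) z

end MatchingPolynomial

/-- The local recursion for the root-exposure probability:
`R_z[G,∘] = z² / (z² + Σ_{v ∼ ∘} R_z[G-∘, v])` for every `z > 0`. -/
theorem rootExposure_recursion {V : Type*} [Fintype V]
    (G : SimpleGraph V) [DecidableRel G.Adj] (r : V) (z : ℝ) (hz : 0 < z) :
    rootExposure G r z =
      z ^ 2 / (z ^ 2 + ∑ v ∈ (G.neighborFinset r).attach,
        rootExposure (G.induce {u : V | u ≠ r})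
          ⟨v.1, ((G.mem_neighborFinset r v.1).mp v.2).ne'⟩ z) := by
  have hpos := matchingPolynomial_pos (G.induce {u : V | u ≠ r}) hz
  simp only [rootExposure, ← sum_div, ← mul_sum]
  rw [matchingPolynomial_eq_mul_add_sum r z]
  field_simp
  -- the two sides differ only in the `Fintype` instances chosen on the vertex types of `G - r - v`
  congr!
end

section
/- Fix d ∈ ℕ and a complex number z with positive real part. The map φ_{z,d}(x_1,...,x_d) = z²·(z² + Σ_{i=1}^d x_i)^{-1} maps (zℍ₊)^d into zℍ₊, where ℍ₊ = {w ∈ ℂ : Re(w) > 0} and zℍ₊ = {z·w : w ∈ ℍ₊}; moreover |φ_{z,d}(x)| ≤ |z| / Re(z) for all x ∈ (zℍ₊)^d. -/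
/-!
Factor the denominator: if `∑ xᵢ = z W` with `Re W ≥ 0`, then
`φ_{z,d}(x) = z (z + W)⁻¹`. Inversion preserves the right half-plane, so `(z + W)⁻¹ ∈ ℍ₊`,
and `|z + W| ≥ Re (z + W) ≥ Re z` gives the bound.
-/

namespace Complex

lemma re_inv_pos {u : ℂ} (hu : 0 < u.re) : 0 < u⁻¹.re := by
  rw [inv_re]
  exact div_pos hu (normSq_pos.2 (ne_zero_of_re_pos hu))

lemma norm_inv_le_inv_re {u : ℂ} (hu : 0 < u.re) : ‖u⁻¹‖ ≤ u.re⁻¹ := by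
  rw [norm_inv]
  exact inv_anti₀ hu (re_le_norm u)

lemma exists_sum_eq_mul_of_forall_eq_mul {ι : Type*} (s : Finset ι) (z : ℂ) (x : ι → ℂ)
    (hx : ∀ i, ∃ w : ℂ, 0 < w.re ∧ x i = z * w) :
    ∃ W : ℂ, 0 ≤ W.re ∧ ∑ i ∈ s, x i = z * W := by
  choose w hw_re hw using hx
  refine ⟨∑ i ∈ s, w i, ?_, ?_⟩
  · rw [re_sum]
    exact Finset.sum_nonneg fun i _ => (hw_re i).le
  · rw [Finset.mul_sum]
    exact Finset.sum_congr rfl fun i _ => hw i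

lemma sq_mul_inv_sq_add_mul {z : ℂ} (hz : z ≠ 0) (W : ℂ) :
    z ^ 2 * (z ^ 2 + z * W)⁻¹ = z * (z + W)⁻¹ := by
  rw [show z ^ 2 + z * W = z * (z + W) by ring, mul_inv, pow_two]
  field_simp

end Complex

open Complex in
/-- For `z` in the open right half-plane and `x₁, …, x_d ∈ zℍ₊` (where
`zℍ₊ = {z⬝w : Re(w) > 0}`), the value `φ_{z,d}(x) = z² (z² + Σᵢ xᵢ)⁻¹` again lies in
`zℍ₊`, and moreover `|φ_{z,d}(x)| ≤ |z| / Re(z)`. -/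
theorem phi_maps_zH_to_zH_and_bound (d : ℕ) (z : ℂ) (hz : 0 < z.re)
    (x : Fin d → ℂ) (hx : ∀ i, ∃ w : ℂ, 0 < w.re ∧ x i = z * w) :
    (∃ w : ℂ, 0 < w.re ∧ z ^ 2 * (z ^ 2 + ∑ i, x i)⁻¹ = z * w) ∧
      ‖z ^ 2 * (z ^ 2 + ∑ i, x i)⁻¹‖ ≤ ‖z‖ / z.re := by
  obtain ⟨W, hW, hsum⟩ := exists_sum_eq_mul_of_forall_eq_mul Finset.univ z x hx
  have hre_le : z.re ≤ (z + W).re := by rw [add_re]; linarith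
  have hzW : 0 < (z + W).re := hz.trans_le hre_le
  rw [hsum, sq_mul_inv_sq_add_mul (ne_zero_of_re_pos hz)]
  refine ⟨⟨(z + W)⁻¹, re_inv_pos hzW, rfl⟩, ?_⟩
  calc ‖z * (z + W)⁻¹‖ ≤ ‖z‖ * (z + W).re⁻¹ := by
        rw [norm_mul]; gcongr; exact norm_inv_le_inv_re hzW
    _ ≤ ‖z‖ * z.re⁻¹ := by gcongr ‖z‖ * ?_⁻¹
    _ = ‖z‖ / z.re := (div_eq_mul_inv _ _).symm
end

section
/- For each k ≥ 3, the function z ↦ z(1 − e^{−z}) / (1 − e^{−z} − z e^{−z}) is strictly increasing on (0,∞), tends to 2 as z → 0⁺ and to ∞ as z → ∞; hence the equation k = ξ(1−e^{−ξ})/(1−e^{−ξ}−ξe^{−ξ}) has a unique positive solution ξ. -/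
/-! Multiplying numerator and denominator by `e^z` turns the function into
`F z = z (e^z - 1) / (e^z - 1 - z)`. Its derivative has the sign of `(e^z - 1)^2 - z^2 e^z`,
which after division by `e^z` is `4 sinh² (z/2) - z^2 > 0`. Two applications of l'Hôpital's rule
give `F z → 2` as `z → 0⁺`, and `F z ≥ z` gives `F z → ∞`. A continuous strictly increasing
function with these limits takes every value `k > 2` exactly once. -/

open Filter Topology Set Real

section IntermediateValue

variable {α δ : Type*} [ConditionallyCompleteLinearOrder α] [DenselyOrdered α] [NoMaxOrder α]
  [TopologicalSpace α] [OrderTopology α] [LinearOrder δ] [TopologicalSpace δ] [OrderTopology δ]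

theorem StrictMonoOn.existsUnique_eq_of_tendsto_nhdsGT {f : α → δ} {a : α} {l c : δ}
    (hmono : StrictMonoOn f (Ioi a)) (hcont : ContinuousOn f (Ioi a))
    (hbot : Tendsto f (𝓝[>] a) (𝓝 l)) (htop : Tendsto f atTop atTop) (hc : l < c) :
    ∃! x, a < x ∧ f x = c := by
  obtain ⟨x₀, hx₀c, hx₀⟩ := ((hbot.eventually (gt_mem_nhds hc)).and self_mem_nhdsWithin).exists
  obtain ⟨x₁, hx₁c, hx₀₁⟩ := ((htop.eventually_ge_atTop c).and (eventually_gt_atTop x₀)).exists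
  have hsub : Icc x₀ x₁ ⊆ Ioi a := fun x hx => lt_of_lt_of_le hx₀ hx.1
  obtain ⟨x, hx, rfl⟩ := intermediate_value_Icc hx₀₁.le (hcont.mono hsub) ⟨hx₀c.le, hx₁c⟩
  exact ⟨x, ⟨hsub hx, rfl⟩, fun y ⟨hy, hyx⟩ => hmono.injOn hy (hsub hx) hyx⟩

end IntermediateValue

theorem exp_sub_one_sub_pos {x : ℝ} (hx : x ≠ 0) : 0 < exp x - 1 - x := by
  linarith [add_one_lt_exp hx]

theorem sq_mul_exp_lt_sq_exp_sub_one {x : ℝ} (hx : 0 < x) : x ^ 2 * exp x < (exp x - 1) ^ 2 := by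
  set a := exp (x / 2)
  have ha : 0 < a := exp_pos _
  have ha_sq : a ^ 2 = exp x := by rw [← exp_nat_mul]; ring_nf
  have ha_inv : a * exp (-(x / 2)) = 1 := by rw [← exp_add]; simp
  -- `x < a - a⁻¹ = 2 sinh (x/2)`, multiplied by `a`
  have hlt : x * a < a ^ 2 - 1 := by
    have := self_lt_sinh_iff.mpr (half_pos hx)
    rw [sinh_eq] at this
    nlinarith
  calc x ^ 2 * exp x = (x * a) ^ 2 := by rw [← ha_sq]; ring
    _ < (a ^ 2 - 1) ^ 2 := pow_lt_pow_left₀ hlt (by positivity) two_ne_zero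
    _ = (exp x - 1) ^ 2 := by rw [ha_sq]

noncomputable def cuckooRatio (z : ℝ) : ℝ := z * (exp z - 1) / (exp z - 1 - z)

theorem div_exp_neg_eq_cuckooRatio (z : ℝ) :
    z * (1 - exp (-z)) / (1 - exp (-z) - z * exp (-z)) = cuckooRatio z := by
  have h : exp (-z) * exp z = 1 := by rw [← exp_add]; simp
  rw [cuckooRatio, ← mul_div_mul_right _ _ (exp_ne_zero z)]
  congr 1
  · linear_combination (-z) * h
  · linear_combination (-(1 + z)) * h

theorem continuousOn_cuckooRatio : ContinuousOn cuckooRatio (Ioi 0) :=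
  ContinuousOn.div (by fun_prop) (by fun_prop) fun _ hx => (exp_sub_one_sub_pos (ne_of_gt hx)).ne'

theorem hasDerivAt_mul_exp_sub_one (x : ℝ) :
    HasDerivAt (fun z => z * (exp z - 1)) (exp x - 1 + x * exp x) x :=
  ((hasDerivAt_id' x).mul ((hasDerivAt_exp x).sub_const 1)).congr_deriv (by ring)

theorem hasDerivAt_exp_sub_one_sub (x : ℝ) : HasDerivAt (fun z => exp z - 1 - z) (exp x - 1) x :=
  ((hasDerivAt_exp x).sub_const 1).sub (hasDerivAt_id x)

theorem hasDerivAt_cuckooRatio {x : ℝ} (hx : x ≠ 0) :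
    HasDerivAt cuckooRatio (((exp x - 1) ^ 2 - x ^ 2 * exp x) / (exp x - 1 - x) ^ 2) x :=
  ((hasDerivAt_mul_exp_sub_one x).div (hasDerivAt_exp_sub_one_sub x)
    (exp_sub_one_sub_pos hx).ne').congr_deriv (by ring)

theorem strictMonoOn_cuckooRatio : StrictMonoOn cuckooRatio (Ioi 0) := by
  refine strictMonoOn_of_deriv_pos (convex_Ioi 0) continuousOn_cuckooRatio fun x hx => ?_
  rw [interior_Ioi] at hx
  rw [(hasDerivAt_cuckooRatio (ne_of_gt hx)).deriv]
  exact div_pos (sub_pos.mpr (sq_mul_exp_lt_sq_exp_sub_one hx))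
    (pow_pos (exp_sub_one_sub_pos (ne_of_gt hx)) 2)

theorem tendsto_cuckooRatio_nhdsGT_zero : Tendsto cuckooRatio (𝓝[>] 0) (𝓝 2) := by
  have tendsto_zero {f : ℝ → ℝ} (hf : Continuous f) (h0 : f 0 = 0) : Tendsto f (𝓝[>] 0) (𝓝 0) :=
    (hf.tendsto' 0 0 h0).mono_left nhdsWithin_le_nhds
  have hnum' (x : ℝ) : HasDerivAt (fun z => exp z - 1 + z * exp z) (2 * exp x + x * exp x) x :=
    (((hasDerivAt_exp x).sub_const 1).add ((hasDerivAt_id' x).mul (hasDerivAt_exp x))).congr_deriv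
      (by ring)
  have hden' (x : ℝ) : HasDerivAt (fun z => exp z - 1) (exp x) x := (hasDerivAt_exp x).sub_const 1
  have hsecond : Tendsto (fun x => (2 * exp x + x * exp x) / exp x) (𝓝[>] 0) (𝓝 2) := by
    have : Tendsto (fun x : ℝ => 2 + x) (𝓝[>] 0) (𝓝 (2 + 0)) :=
      tendsto_const_nhds.add (tendsto_nhdsWithin_of_tendsto_nhds tendsto_id)
    rw [add_zero] at this
    refine this.congr fun x => ?_
    field_simp
  have hfirst : Tendsto (fun x => (exp x - 1 + x * exp x) / (exp x - 1)) (𝓝[>] 0) (𝓝 2) :=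
    HasDerivAt.lhopital_zero_nhdsGT (.of_forall hnum') (.of_forall hden')
      (.of_forall fun x => (exp_pos x).ne') (tendsto_zero (by fun_prop) (by simp))
      (tendsto_zero (by fun_prop) (by simp)) hsecond
  have hden_ne : ∀ᶠ x in 𝓝[>] (0 : ℝ), exp x - 1 ≠ 0 := by
    filter_upwards [self_mem_nhdsWithin] with x (hx : 0 < x)
    linarith [add_one_lt_exp hx.ne']
  exact HasDerivAt.lhopital_zero_nhdsGT (.of_forall hasDerivAt_mul_exp_sub_one)
    (.of_forall hasDerivAt_exp_sub_one_sub) hden_ne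
    (tendsto_zero (by fun_prop) (by simp)) (tendsto_zero (by fun_prop) (by simp)) hfirst

theorem tendsto_cuckooRatio_atTop : Tendsto cuckooRatio atTop atTop := by
  refine tendsto_atTop_mono' _ ?_ tendsto_id
  filter_upwards [eventually_gt_atTop 0] with x hx
  have hden := exp_sub_one_sub_pos (ne_of_gt hx)
  rw [id, cuckooRatio, le_div_iff₀ hden]
  nlinarith

/-- The function `z ↦ z(1−e^{−z})/(1−e^{−z}−z e^{−z})` is strictly increasing on `(0,∞)`,
tends to `2` as `z → 0⁺` and to `∞` as `z → ∞`; hence for every `k ≥ 3` the equation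
`k = ξ(1−e^{−ξ})/(1−e^{−ξ}−ξe^{−ξ})` has a unique positive solution `ξ`. -/
theorem cuckoo_threshold_function (k : ℕ) (hk : 3 ≤ k) :
    StrictMonoOn
        (fun z : ℝ => z * (1 - Real.exp (-z)) / (1 - Real.exp (-z) - z * Real.exp (-z)))
        (Set.Ioi (0 : ℝ)) ∧
      Tendsto
        (fun z : ℝ => z * (1 - Real.exp (-z)) / (1 - Real.exp (-z) - z * Real.exp (-z)))
        (nhdsWithin 0 (Set.Ioi (0 : ℝ))) (nhds 2) ∧
      Tendsto
        (fun z : ℝ => z * (1 - Real.exp (-z)) / (1 - Real.exp (-z) - z * Real.exp (-z)))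
        atTop atTop ∧
      ∃! ξ : ℝ, 0 < ξ ∧
        (k : ℝ) = ξ * (1 - Real.exp (-ξ)) / (1 - Real.exp (-ξ) - ξ * Real.exp (-ξ)) := by
  simp only [div_exp_neg_eq_cuckooRatio]
  refine ⟨strictMonoOn_cuckooRatio, tendsto_cuckooRatio_nhdsGT_zero, tendsto_cuckooRatio_atTop, ?_⟩
  have hk2 : (2 : ℝ) < k := by exact_mod_cast hk
  simpa only [eq_comm] using strictMonoOn_cuckooRatio.existsUnique_eq_of_tendsto_nhdsGT
    continuousOn_cuckooRatio tendsto_cuckooRatio_nhdsGT_zero tendsto_cuckooRatio_atTop hk2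
end

section
/- Let φ^a and φ^b be probability generating functions of distributions π^a, π^b on ℕ with finite positive means, with size-biased generating functions φ̂^a(t)=φ^a{}'(t)/φ^a{}'(1) and φ̂^b(t)=φ^b{}'(t)/φ^b{}'(1). Define F^a(x) = φ^a(1 − φ̂^b(1−x)) − (φ^a{}'(1)/φ^b{}'(1))·(1 − φ^b(1−x) − x φ^b{}'(1−x)), and F^b symmetrically with roles of a and b swapped. If x ∈ [0,1] satisfies φ̂^a(1 − φ̂^b(1−x)) = x, then setting y = φ̂^b(1−x) and λ = φ^b{}'(1)/(φ^a{}'(1)+φ^b{}'(1)), one has λ(1 − F^a(x)) = (1−λ)(1 − F^b(y)). -/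
/-!
The identity is algebraic. Put `A = φ^a'(1)`, `B = φ^b'(1)`, `y = φ̂^b(1−x)`. Then
`x φ^b'(1−x) = B x y`, and the fixed-point relation `φ̂^a(1−y) = x` gives `y φ^a'(1−y) = A x y`,
so both sides equal `(B (1 − φ^a(1−y)) + A (1 − φ^b(1−x)) − A B x y) / (A + B)`.
-/

/-- Generating function `φ(x) = Σ_{n ≤ N} πₙ xⁿ` of a distribution supported on `{0,…,N}`. -/
noncomputable def pgf (N : ℕ) (π : ℕ → ℝ) (x : ℝ) : ℝ :=
  ∑ n ∈ Finset.range (N + 1), π n * x ^ n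

/-- First derivative `φ'(x) = Σ n πₙ x^{n-1}`. -/
noncomputable def pgfD (N : ℕ) (π : ℕ → ℝ) (x : ℝ) : ℝ :=
  ∑ n ∈ Finset.range (N + 1), (n : ℝ) * π n * x ^ (n - 1)

/-- The function `F^a(x) = φ^a(1 − φ̂^b(1−x)) − (φ^a{}'(1)/φ^b{}'(1))(1 − φ^b(1−x) − x φ^b{}'(1−x))`,
where `φ̂^b(t) = φ^b{}'(t)/φ^b{}'(1)`. -/
noncomputable def Fsym (Na : ℕ) (πa : ℕ → ℝ) (Nb : ℕ) (πb : ℕ → ℝ) (x : ℝ) : ℝ :=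
  pgf Na πa (1 - pgfD Nb πb (1 - x) / pgfD Nb πb 1)
    - (pgfD Na πa 1 / pgfD Nb πb 1)
      * (1 - pgf Nb πb (1 - x) - x * pgfD Nb πb (1 - x))

theorem weighted_sum_symm {A B : ℝ} (hA : A ≠ 0) (hB : B ≠ 0) (hAB : A + B ≠ 0)
    (u v p q : ℝ) :
    B / (A + B) * (u + A / B * v - A * p * q) = (1 - B / (A + B)) * (v + B / A * u - B * q * p) := by
  field_simp
  ring

theorem one_sub_Fsym (Na : ℕ) (πa : ℕ → ℝ) (Nb : ℕ) (πb : ℕ → ℝ) (x : ℝ) :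
    1 - Fsym Na πa Nb πb x
      = (1 - pgf Na πa (1 - pgfD Nb πb (1 - x) / pgfD Nb πb 1))
        + pgfD Na πa 1 / pgfD Nb πb 1 * (1 - pgf Nb πb (1 - x))
        - pgfD Na πa 1 * x * (pgfD Nb πb (1 - x) / pgfD Nb πb 1) := by
  unfold Fsym
  ring

theorem bipartite_symmetry_general (Na : ℕ) (πa : ℕ → ℝ) (Nb : ℕ) (πb : ℕ → ℝ)
    (hma : 0 < pgfD Na πa 1) (hmb : 0 < pgfD Nb πb 1)
    (x : ℝ)
    (hfix : pgfD Na πa (1 - pgfD Nb πb (1 - x) / pgfD Nb πb 1) / pgfD Na πa 1 = x) :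
    (pgfD Nb πb 1 / (pgfD Na πa 1 + pgfD Nb πb 1)) * (1 - Fsym Na πa Nb πb x)
      = (1 - pgfD Nb πb 1 / (pgfD Na πa 1 + pgfD Nb πb 1))
          * (1 - Fsym Nb πb Na πa (pgfD Nb πb (1 - x) / pgfD Nb πb 1)) := by
  rw [one_sub_Fsym, one_sub_Fsym, hfix]
  exact weighted_sum_symm hma.ne' hmb.ne' (by positivity) _ _ _ _

/-- Symmetry of the bipartite formula: if `x` satisfies the fixed-point relation
`φ̂^a(1 − φ̂^b(1−x)) = x`, then with `y = φ̂^b(1−x)` and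
`λ = φ^b{}'(1)/(φ^a{}'(1) + φ^b{}'(1))` one has `λ(1 − F^a(x)) = (1−λ)(1 − F^b(y))`. -/
theorem bipartite_symmetry (Na : ℕ) (πa : ℕ → ℝ) (Nb : ℕ) (πb : ℕ → ℝ)
    (hπa : ∀ n, 0 ≤ πa n) (hπb : ∀ n, 0 ≤ πb n)
    (hsa : ∑ n ∈ Finset.range (Na + 1), πa n = 1)
    (hsb : ∑ n ∈ Finset.range (Nb + 1), πb n = 1)
    (hma : 0 < pgfD Na πa 1) (hmb : 0 < pgfD Nb πb 1)
    (x : ℝ) (hx0 : 0 ≤ x) (hx1 : x ≤ 1)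
    (hfix : pgfD Na πa (1 - pgfD Nb πb (1 - x) / pgfD Nb πb 1) / pgfD Na πa 1 = x) :
    (pgfD Nb πb 1 / (pgfD Na πa 1 + pgfD Nb πb 1)) * (1 - Fsym Na πa Nb πb x)
      = (1 - pgfD Nb πb 1 / (pgfD Na πa 1 + pgfD Nb πb 1))
          * (1 - Fsym Nb πb Na πa (pgfD Nb πb (1 - x) / pgfD Nb πb 1)) :=
  bipartite_symmetry_general Na πa Nb πb hma hmb x hfix
end
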